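/- Let $\mu$ be a probability measure, $p,q>1$ with $1/p+1/q=1$, and let $F \in L^p(\mu)$ satisfy $\int F\,d\mu = 0$. Then $\|F\|_{L^p(\mu)} \leq 2 \sup \{ |\int F G_0\,d\mu| / \|G_0\|_{L^q(\mu)} : G_0 \in L^q(\mu), G_0 \neq 0, \int G_0\,d\mu = 0 \}$. -/

import Mathlib

open MeasureTheory

/-- duality bound for mean-zero `L^p` functions tested against mean-zero
`L^q` functions, with factor `2`. -/
theorem stmt2 {α : Type*} [MeasurableSpace α] (μ : Measure α) [IsProbabilityMeasure μ]
    (p q : ℝ) (hp : 1 < p) (hq : 1 < q) (hpq : 1 / p + 1 / q = 1)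
    (F : α → ℝ) (hF : MemLp F (ENNReal.ofReal p) μ) (hF0 : ∫ x, F x ∂μ = 0) :
    (eLpNorm F (ENNReal.ofReal p) μ).toReal ≤
      2 * sSup {r : ℝ | ∃ G : α → ℝ, MemLp G (ENNReal.ofReal q) μ ∧
        (∫ x, G x ∂μ = 0) ∧ eLpNorm G (ENNReal.ofReal q) μ ≠ 0 ∧
        r = |∫ x, F x * G x ∂μ| / (eLpNorm G (ENNReal.ofReal q) μ).toReal} := by
  set S := {r : ℝ | ∃ G : α → ℝ, MemLp G (ENNReal.ofReal q) μ ∧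
        (∫ x, G x ∂μ = 0) ∧ eLpNorm G (ENNReal.ofReal q) μ ≠ 0 ∧
        r = |∫ x, F x * G x ∂μ| / (eLpNorm G (ENNReal.ofReal q) μ).toReal} with hS
  have hpq' : p.HolderConjugate q := Real.holderConjugate_iff.mpr ⟨hp, by rwa [one_div, one_div] at hpq⟩
  have hp0 : (0:ℝ) < p := hpq'.pos
  have hq0 : (0:ℝ) < q := hpq'.symm.pos
  have hP0 : ENNReal.ofReal p ≠ 0 := by simp [ENNReal.ofReal_eq_zero, not_le, hp0]
  have hQ0 : ENNReal.ofReal q ≠ 0 := by simp [ENNReal.ofReal_eq_zero, not_le, hq0]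
  have hPt : ENNReal.ofReal p ≠ ⊤ := ENNReal.ofReal_ne_top
  have hQt : ENNReal.ofReal q ≠ ⊤ := ENNReal.ofReal_ne_top
  have hQ1 : (1 : ENNReal) ≤ ENNReal.ofReal q := ENNReal.one_le_ofReal.mpr hq.le
  have hP1 : (1 : ENNReal) ≤ ENNReal.ofReal p := ENNReal.one_le_ofReal.mpr hp.le
  set I : ℝ := ∫ a, ‖F a‖ ^ p ∂μ with hIdef
  have hAI : eLpNorm F (ENNReal.ofReal p) μ = ENNReal.ofReal (I ^ p⁻¹) := by
    rw [hF.eLpNorm_eq_integral_rpow_norm hP0 hPt, ENNReal.toReal_ofReal hp0.le]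
  have hInn : (0:ℝ) ≤ I :=
    integral_nonneg fun a => Real.rpow_nonneg (norm_nonneg _) _
  -- supremum is nonnegative
  have hSnn : (0:ℝ) ≤ sSup S := by
    apply Real.sSup_nonneg
    rintro r ⟨G, _, _, _, rfl⟩
    exact div_nonneg (abs_nonneg _) ENNReal.toReal_nonneg
  -- bounded above by A
  set A : ℝ := (eLpNorm F (ENNReal.ofReal p) μ).toReal with hAdef
  have hSbdd : BddAbove S := by
    refine ⟨A, ?_⟩
    rintro r ⟨G', hG', -, hG'ne, rfl⟩
    have hB'pos : 0 < (eLpNorm G' (ENNReal.ofReal q) μ).toReal :=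
      ENNReal.toReal_pos hG'ne hG'.2.ne
    rw [div_le_iff₀ hB'pos]
    have hB'val : (eLpNorm G' (ENNReal.ofReal q) μ).toReal
        = (∫ a, ‖G' a‖ ^ q ∂μ) ^ q⁻¹ := by
      rw [hG'.eLpNorm_eq_integral_rpow_norm hQ0 hQt, ENNReal.toReal_ofReal hq0.le,
        ENNReal.toReal_ofReal]
      positivity
    have hAval : A = I ^ p⁻¹ := by
      rw [hAdef, hAI, ENNReal.toReal_ofReal]; positivity
    calc |∫ x, F x * G' x ∂μ| ≤ ∫ x, ‖F x * G' x‖ ∂μ := by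
          rw [← Real.norm_eq_abs]; exact norm_integral_le_integral_norm _
      _ = ∫ x, ‖F x‖ * ‖G' x‖ ∂μ := by
          apply integral_congr_ae; filter_upwards with x; exact norm_mul _ _
      _ ≤ (∫ a, ‖F a‖ ^ p ∂μ) ^ (1/p) * (∫ a, ‖G' a‖ ^ q ∂μ) ^ (1/q) :=
          integral_mul_norm_le_Lp_mul_Lq hpq' hF hG'
      _ = A * (eLpNorm G' (ENNReal.ofReal q) μ).toReal := by
          rw [hB'val, hAval, one_div, one_div]
  -- main case split
  by_cases hI : I = 0
  · have hA0 : A = 0 := by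
      rw [hAdef, hAI, hI, Real.zero_rpow (by positivity : p⁻¹ ≠ 0)]
      simp
    linarith
  have hIpos : 0 < I := lt_of_le_of_ne hInn (Ne.symm hI)
  -- the dual function
  set G : α → ℝ := fun x => F x * |F x| ^ (p - 2) with hGdef
  have hFm : AEMeasurable F μ := hF.1.aemeasurable
  have hGm : AEStronglyMeasurable G μ :=
    (hFm.mul ((measurable_abs.comp_aemeasurable hFm).pow aemeasurable_const)).aestronglyMeasurable
  have hFG : ∀ x, F x * G x = |F x| ^ p := by
    intro x
    by_cases h : F x = 0
    · simp [hGdef, h, Real.zero_rpow (ne_of_gt hp0)]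
    · have habs : (0:ℝ) < |F x| := abs_pos.mpr h
      have h2 : F x * G x = |F x| ^ (2:ℝ) * |F x| ^ (p - 2) := by
        rw [Real.rpow_two, sq_abs, hGdef]; ring
      rw [h2, ← Real.rpow_add habs]; ring_nf
  have hGabs : ∀ x, |G x| = |F x| ^ (p - 1) := by
    intro x
    by_cases h : F x = 0
    · simp [hGdef, h, Real.zero_rpow (by linarith : p - 1 ≠ 0)]
    · have habs : (0:ℝ) < |F x| := abs_pos.mpr h
      rw [hGdef]
      simp only [abs_mul, abs_of_nonneg (Real.rpow_nonneg (abs_nonneg _) _)]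
      have h3 : |F x| ^ (p-1) = |F x| ^ (1:ℝ) * |F x| ^ (p-2) := by
        rw [← Real.rpow_add habs]; congr 1; ring
      rw [h3, Real.rpow_one]
  -- MemLp G q
  have hGrpow : MemLp (fun x => ‖F x‖ ^ (p-1)) (ENNReal.ofReal q) μ := by
    constructor
    · exact ((measurable_abs.comp_aemeasurable hFm).pow
        (aemeasurable_const : AEMeasurable (fun _ : α => p - 1) μ)).aestronglyMeasurable
    · rw [eLpNorm_norm_rpow F (by linarith : (0:ℝ) < p - 1), ← ENNReal.ofReal_mul hq0.le]
      have : q * (p - 1) = p := by rw [mul_comm]; exact hpq'.sub_one_mul_conj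
      rw [this]
      exact ENNReal.rpow_lt_top_of_nonneg (by linarith) hF.2.ne
  have hG : MemLp G (ENNReal.ofReal q) μ := by
    refine hGrpow.of_le hGm ?_
    filter_upwards with x
    simp only [Real.norm_eq_abs, hGabs x,
      abs_of_nonneg (Real.rpow_nonneg (abs_nonneg (F x)) (p-1))]
    exact le_refl _
  -- norm of G
  have hGq_int : ∫ a, ‖G a‖ ^ q ∂μ = I := by
    rw [hIdef]
    apply integral_congr_ae; filter_upwards with x
    rw [Real.norm_eq_abs, hGabs x, ← Real.rpow_mul (abs_nonneg _),
      hpq'.sub_one_mul_conj, Real.norm_eq_abs]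
  have hBval : eLpNorm G (ENNReal.ofReal q) μ = ENNReal.ofReal (I ^ q⁻¹) := by
    rw [hG.eLpNorm_eq_integral_rpow_norm hQ0 hQt, ENNReal.toReal_ofReal hq0.le, hGq_int]
  set B : ℝ := (eLpNorm G (ENNReal.ofReal q) μ).toReal with hBdef
  have hB : B = I ^ q⁻¹ := by rw [hBdef, hBval, ENNReal.toReal_ofReal]; positivity
  have hBpos : 0 < B := by rw [hB]; positivity
  -- integrability
  have hGint : Integrable G μ := hG.integrable hQ1
  have hFint : Integrable F μ := hF.integrable hP1
  set m : ℝ := ∫ x, G x ∂μ with hmdef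
  have hFGint : Integrable (fun x => F x * G x) μ := by
    have : (fun x => F x * G x) = fun a => ‖F a‖ ^ p := by
      funext x; rw [hFG x, Real.norm_eq_abs]
    rw [this]
    have h := hF.integrable_norm_rpow hP0 hPt
    rwa [ENNReal.toReal_ofReal hp0.le] at h
  have hFGI : ∫ x, F x * G x ∂μ = I := by
    rw [hIdef]; apply integral_congr_ae; filter_upwards with x
    rw [hFG x, Real.norm_eq_abs]
  -- the recentered function
  set G₀ : α → ℝ := fun x => G x - m with hG₀def
  have hG₀ : MemLp G₀ (ENNReal.ofReal q) μ := hG.sub (memLp_const m)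
  have hG₀int0 : ∫ x, G₀ x ∂μ = 0 := by
    rw [hG₀def]
    rw [integral_sub hGint (integrable_const m), integral_const]
    simp [hmdef]
  have hFG₀I : ∫ x, F x * G₀ x ∂μ = I := by
    have : (fun x => F x * G₀ x) = fun x => F x * G x - m * F x := by
      funext x; rw [hG₀def]; ring
    rw [this, integral_sub hFGint (hFint.const_mul m), integral_const_mul, hF0, hFGI]
    ring
  have hG₀ne : eLpNorm G₀ (ENNReal.ofReal q) μ ≠ 0 := by
    intro h
    have hzero : G₀ =ᵐ[μ] 0 := (eLpNorm_eq_zero_iff hG₀.1 hQ0).mp h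
    have : ∫ x, F x * G₀ x ∂μ = 0 := by
      rw [integral_congr_ae (g := fun _ => (0:ℝ))]
      · simp
      · filter_upwards [hzero] with x hx
        rw [Pi.zero_apply] at hx; rw [hx]; ring
    rw [hFG₀I] at this; exact hIpos.ne' this
  set B₀ : ℝ := (eLpNorm G₀ (ENNReal.ofReal q) μ).toReal with hB₀def
  have hB₀pos : 0 < B₀ := ENNReal.toReal_pos hG₀ne hG₀.2.ne
  -- bound B₀ ≤ 2 B
  have hmB : (‖m‖₊ : ENNReal) ≤ eLpNorm G (ENNReal.ofReal q) μ := by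
    have h1 : MemLp G 1 μ := hG.mono_exponent hQ1
    have e1 : eLpNorm G 1 μ = ENNReal.ofReal (∫ a, ‖G a‖ ∂μ) := by
      rw [h1.eLpNorm_eq_integral_rpow_norm one_ne_zero ENNReal.one_ne_top]
      simp
    calc (‖m‖₊ : ENNReal) = ENNReal.ofReal ‖m‖ := (ofReal_norm m).symm
      _ ≤ ENNReal.ofReal (∫ a, ‖G a‖ ∂μ) :=
          ENNReal.ofReal_le_ofReal (norm_integral_le_integral_norm _)
      _ = eLpNorm G 1 μ := e1.symm
      _ ≤ eLpNorm G (ENNReal.ofReal q) μ := eLpNorm_le_eLpNorm_of_exponent_le hQ1 hG.1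
  have hB₀le : eLpNorm G₀ (ENNReal.ofReal q) μ ≤ 2 * eLpNorm G (ENNReal.ofReal q) μ := by
    have htri : eLpNorm G₀ (ENNReal.ofReal q) μ ≤
        eLpNorm G (ENNReal.ofReal q) μ + eLpNorm (fun _ : α => m) (ENNReal.ofReal q) μ :=
      eLpNorm_sub_le hG.1 aestronglyMeasurable_const hQ1
    have hconst : eLpNorm (fun _ : α => m) (ENNReal.ofReal q) μ = (‖m‖₊ : ENNReal) := by
      rw [eLpNorm_const m hQ0 (IsProbabilityMeasure.ne_zero μ)]
      simp
      rfl
    calc eLpNorm G₀ (ENNReal.ofReal q) μ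
        ≤ eLpNorm G (ENNReal.ofReal q) μ + eLpNorm (fun _ : α => m) (ENNReal.ofReal q) μ := htri
      _ ≤ eLpNorm G (ENNReal.ofReal q) μ + eLpNorm G (ENNReal.ofReal q) μ := by
          rw [hconst]; exact add_le_add_right hmB _
      _ = 2 * eLpNorm G (ENNReal.ofReal q) μ := (two_mul _).symm
  have hB₀le' : B₀ ≤ 2 * B := by
    rw [hB₀def, hBdef]
    have h2 : ((2 : ENNReal) * eLpNorm G (ENNReal.ofReal q) μ).toReal
        = 2 * (eLpNorm G (ENNReal.ofReal q) μ).toReal := by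
      rw [ENNReal.toReal_mul]; norm_num
    rw [← h2]
    exact ENNReal.toReal_mono (ENNReal.mul_ne_top (by norm_num) hG.2.ne) hB₀le
  -- membership
  have hmem : I / B₀ ∈ S := by
    refine ⟨G₀, hG₀, hG₀int0, hG₀ne, ?_⟩
    rw [hFG₀I, abs_of_pos hIpos, hB₀def]
  -- conclusion
  have hAval : A = I ^ p⁻¹ := by
    rw [hAdef, hAI, ENNReal.toReal_ofReal]; positivity
  have hABI : A * B = I := by
    rw [hAval, hB, ← Real.rpow_add hIpos, hpq'.inv_add_inv_eq_one, Real.rpow_one]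
  have key : A / 2 ≤ I / B₀ := by
    have h1 : I / (2 * B) ≤ I / B₀ :=
      div_le_div_of_nonneg_left hIpos.le hB₀pos hB₀le'
    have h2 : A / 2 = I / (2 * B) := by
      rw [← hABI]; field_simp
    linarith
  have hfin : I / B₀ ≤ sSup S := le_csSup hSbdd hmem
  linarith
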